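/- arXiv:2207.07007 — 8 statements merged into one kernel-verified Lean document; each statement's English description precedes it below -/
import Mathlib

section
/- Let (x*, y*) be an exact Nash equilibrium of the zero-sum game (R, -R) and (x̂, ŷ) an exact Nash equilibrium of the zero-sum game (-C, C). If x̂^T C ŷ ≤ (x*)^T R y* ≤ 1/2, then the profile (x̂, y*) is a (1/2)-well-supported Nash equilibrium of the bimatrix game (R, C). -/
open Finset

/-- A mixed strategy: a probability vector over `Fin n`. -/
def isProb {n : ℕ} (x : Fin n → ℝ) : Prop := (∀ i, 0 ≤ x i) ∧ ∑ i, x i = 1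

/-- Expected payoff `xᵀ A y`. -/
def pay {n : ℕ} (A : Matrix (Fin n) (Fin n) ℝ) (x y : Fin n → ℝ) : ℝ :=
  ∑ i, ∑ j, x i * A i j * y j

/-- Payoff of pure row `i` against `y`: `(e_i)ᵀ A y`. -/
def rowPay {n : ℕ} (A : Matrix (Fin n) (Fin n) ℝ) (i : Fin n) (y : Fin n → ℝ) : ℝ :=
  ∑ j, A i j * y j

/-- Payoff of pure column `j` against `x`: `xᵀ A e_j`. -/
def colPay {n : ℕ} (A : Matrix (Fin n) (Fin n) ℝ) (x : Fin n → ℝ) (j : Fin n) : ℝ :=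
  ∑ i, x i * A i j

/-- `(x, y)` is an ε-well-supported Nash equilibrium of the bimatrix game `(R, C)`. -/
def isWSNE {n : ℕ} (ε : ℝ) (R C : Matrix (Fin n) (Fin n) ℝ) (x y : Fin n → ℝ) : Prop :=
  isProb x ∧ isProb y ∧
  (∀ i, 0 < x i → ∀ k, rowPay R i y ≥ rowPay R k y - ε) ∧
  (∀ j, 0 < y j → ∀ k, colPay C x j ≥ colPay C x k - ε)

/-- `(x, y)` is a Nash equilibrium of the zero-sum game `(R, -R)`:
`x` maximizes `x'ᵀ R y` and `y` minimizes `xᵀ R y'`. -/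
def zeroSumNE_R {n : ℕ} (R : Matrix (Fin n) (Fin n) ℝ) (x y : Fin n → ℝ) : Prop :=
  isProb x ∧ isProb y ∧
  (∀ x', isProb x' → pay R x' y ≤ pay R x y) ∧
  (∀ y', isProb y' → pay R x y ≤ pay R x y')

/-- `(x, y)` is a Nash equilibrium of the zero-sum game `(-C, C)`:
`x` minimizes `x'ᵀ C y` and `y` maximizes `xᵀ C y'`. -/
def zeroSumNE_C {n : ℕ} (C : Matrix (Fin n) (Fin n) ℝ) (x y : Fin n → ℝ) : Prop :=
  isProb x ∧ isProb y ∧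
  (∀ x', isProb x' → pay C x y ≤ pay C x' y) ∧
  (∀ y', isProb y' → pay C x y' ≤ pay C x y)

lemma pure_isProb {n : ℕ} (i : Fin n) : isProb (fun k => if k = i then (1:ℝ) else 0) := by
  constructor
  · intro k; by_cases h : k = i <;> simp [h]
  · simp

lemma pay_pure_row {n : ℕ} (A : Matrix (Fin n) (Fin n) ℝ) (i : Fin n) (y : Fin n → ℝ) :
    pay A (fun k => if k = i then (1:ℝ) else 0) y = rowPay A i y := by
  unfold pay rowPay
  rw [Finset.sum_eq_single i]
  · simp
  · intro b _ hb; simp [hb]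
  · simp

lemma pay_pure_col {n : ℕ} (A : Matrix (Fin n) (Fin n) ℝ) (x : Fin n → ℝ) (j : Fin n) :
    pay A x (fun k => if k = j then (1:ℝ) else 0) = colPay A x j := by
  unfold pay colPay
  apply Finset.sum_congr rfl
  intro i _
  rw [Finset.sum_eq_single j]
  · simp
  · intro b _ hb; simp [hb]
  · simp

/-- if the equilibrium values of the two auxiliary zero-sum games satisfy
`x̂ᵀ C ŷ ≤ x*ᵀ R y* ≤ 1/2`, then `(x̂, y*)` is a 1/2-WSNE of `(R, C)`. -/
theorem stmt2 {n : ℕ} (R C : Matrix (Fin n) (Fin n) ℝ)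
    (hR : ∀ i j, R i j ∈ Set.Icc (0:ℝ) 1) (hC : ∀ i j, C i j ∈ Set.Icc (0:ℝ) 1)
    (xs ys xh yh : Fin n → ℝ)
    (h1 : zeroSumNE_R R xs ys) (h2 : zeroSumNE_C C xh yh)
    (hle : pay C xh yh ≤ pay R xs ys) (hhalf : pay R xs ys ≤ 1/2) :
    isWSNE (1/2) R C xh ys := by
  obtain ⟨hxs, hys, hmaxR, hminR⟩ := h1
  obtain ⟨hxh, hyh, hminC, hmaxC⟩ := h2
  refine ⟨hxh, hys, ?_, ?_⟩
  · intro i _ k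
    have hk : rowPay R k ys ≤ pay R xs ys := by
      rw [← pay_pure_row R k ys]
      exact hmaxR _ (pure_isProb k)
    have hnn : 0 ≤ rowPay R i ys := by
      apply Finset.sum_nonneg
      intro j _
      exact mul_nonneg (hR i j).1 (hys.1 j)
    linarith
  · intro j _ k
    have hk : colPay C xh k ≤ pay C xh yh := by
      rw [← pay_pure_col C xh k]
      exact hmaxC _ (pure_isProb k)
    have hnn : 0 ≤ colPay C xh j := by
      apply Finset.sum_nonneg
      intro i _
      exact mul_nonneg (hxh.1 i) (hC i j).1
    linarith
end

section
/- Let (x*, y*) be a Nash equilibrium of the zero-sum game (R, -R). If a mixed strategy x' satisfies supp(x') ⊆ supp(x*) and (x')^T C e_j ≤ 1/2 for all pure strategies j, then (x', y*) is a (1/2)-well-supported Nash equilibrium of the bimatrix game (R, C). -/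
open Finset

/-- if `supp(x') ⊆ supp(x*)` for a zero-sum equilibrium `(x*, y*)` of `(R,-R)`,
and every column's payoff against `x'` is at most 1/2, then `(x', y*)` is a 1/2-WSNE. -/
theorem stmt3 {n : ℕ} (R C : Matrix (Fin n) (Fin n) ℝ)
    (hR : ∀ i j, R i j ∈ Set.Icc (0:ℝ) 1) (hC : ∀ i j, C i j ∈ Set.Icc (0:ℝ) 1)
    (xs ys x' : Fin n → ℝ)
    (h1 : zeroSumNE_R R xs ys)
    (hx' : isProb x')
    (hsupp : ∀ i, 0 < x' i → 0 < xs i)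
    (hcol : ∀ j, colPay C x' j ≤ 1/2) :
    isWSNE (1/2) R C x' ys := by
  obtain ⟨hxs, hys, hmax, hmin⟩ := h1
  set v := pay R xs ys with hv
  -- each pure row payoff ≤ v
  have hpure : ∀ k, rowPay R k ys ≤ v := by
    intro k
    have hprob : isProb (fun i => if i = k then (1:ℝ) else 0) := by
      constructor
      · intro i; dsimp only; split <;> norm_num
      · simp
    have := hmax _ hprob
    have heq : pay R (fun i => if i = k then (1:ℝ) else 0) ys = rowPay R k ys := by
      unfold pay rowPay
      rw [Finset.sum_eq_single k]
      · simp
      · intro b _ hb; simp [hb]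
      · simp
    linarith [heq ▸ this]
  -- pay as weighted sum of row payoffs
  have hpay : v = ∑ i, xs i * rowPay R i ys := by
    simp only [hv, pay, rowPay, Finset.mul_sum]
    exact Finset.sum_congr rfl fun i _ => Finset.sum_congr rfl fun j _ => by ring
  -- support of xs consists of best responses
  have hbr : ∀ i, 0 < xs i → rowPay R i ys = v := by
    intro i hi
    by_contra hne
    have hlt : rowPay R i ys < v := lt_of_le_of_ne (hpure i) hne
    have : ∑ j, xs j * rowPay R j ys < ∑ j, xs j * v := by
      apply Finset.sum_lt_sum
      · intro j _
        exact mul_le_mul_of_nonneg_left (hpure j) (hxs.1 j)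
      · exact ⟨i, Finset.mem_univ i, by nlinarith⟩
    rw [← Finset.sum_mul, hxs.2, one_mul] at this
    linarith [hpay]
  refine ⟨hx', hys, ?_, ?_⟩
  · intro i hi k
    have := hbr i (hsupp i hi)
    have hk := hpure k
    simp only [ge_iff_le]
    linarith
  · intro j _ k
    have h0 : 0 ≤ colPay C x' j := by
      apply Finset.sum_nonneg
      intro i _
      exact mul_nonneg (hx'.1 i) (hC i j).1
    have := hcol k
    simp only [ge_iff_le]
    linarith
end

section
/- Let (x*, y*) be a Nash equilibrium of the zero-sum game (R, -R) with value (x*)^T R y* > 1/2. Suppose there is no mixed strategy x' with supp(x') ⊆ supp(x*) such that (x')^T C e_j ≤ 1/2 for all columns j. Then every Nash equilibrium (x, y) of the bimatrix subgame (R_{x*}, C_{x*}), in which the row player is restricted to pure strategies in supp(x*), satisfies x^T R y > 1/2 and x^T C y > 1/2. -/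
open Finset

/-- if the value of `(R,-R)` exceeds 1/2 and no strategy supported on
`supp(x*)` keeps all column payoffs at most 1/2, then every Nash equilibrium of the
subgame in which the row player is restricted to `supp(x*)` gives both players
payoff more than 1/2. -/
theorem stmt4 {n : ℕ} (R C : Matrix (Fin n) (Fin n) ℝ)
    (hR : ∀ i j, R i j ∈ Set.Icc (0:ℝ) 1) (hC : ∀ i j, C i j ∈ Set.Icc (0:ℝ) 1)
    (xs ys : Fin n → ℝ)
    (h1 : zeroSumNE_R R xs ys)
    (hval : pay R xs ys > 1/2)
    (hno : ¬ ∃ x' : Fin n → ℝ, isProb x' ∧ (∀ i, 0 < x' i → 0 < xs i) ∧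
            ∀ j, colPay C x' j ≤ 1/2) :
    ∀ x y : Fin n → ℝ,
      isProb x → isProb y → (∀ i, 0 < x i → 0 < xs i) →
      (∀ x', isProb x' → (∀ i, 0 < x' i → 0 < xs i) → pay R x' y ≤ pay R x y) →
      (∀ y', isProb y' → pay C x y' ≤ pay C x y) →
      pay R x y > 1/2 ∧ pay C x y > 1/2 := by

  intro x y hx hy hsupp hxbr hybr
  obtain ⟨hxs, hys, hmax, hmin⟩ := h1
  constructor
  · have h2 : pay R xs ys ≤ pay R xs y := hmin y hy
    have h3 : pay R xs y ≤ pay R x y := hxbr xs hxs (fun i hi => hi)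
    linarith
  · push_neg at hno
    obtain ⟨j, hj⟩ := hno x hx hsupp
    have he : isProb (fun k : Fin n => if k = j then (1:ℝ) else 0) := by
      constructor
      · intro i; by_cases h : i = j <;> simp [h]
      · simp
    have := hybr _ he
    have hpay : pay C x (fun k : Fin n => if k = j then (1:ℝ) else 0) = colPay C x j := by
      unfold pay colPay
      simp [mul_ite]
    rw [hpay] at this
    linarith
end

section
/- Let (x, y) be an ε-well-supported Nash equilibrium of an n×n bimatrix game (R, C), and let x_s, y_s be mixed strategies with supp(x_s) ⊆ supp(x) and supp(y_s) ⊆ supp(y) satisfying |(e_i)^T R y − (e_i)^T R y_s| ≤ ε for all i and |x^T C e_j − x_s^T C e_j| ≤ ε for all j. Then (x_s, y_s) is a 3ε-well-supported Nash equilibrium of (R, C). -/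
open Finset

/-- sampled strategies with supports inside those of an ε-WSNE, whose pure
payoffs deviate by at most ε, form a 3ε-WSNE. -/
theorem stmt6 {n : ℕ} (ε : ℝ) (R C : Matrix (Fin n) (Fin n) ℝ)
    (hR : ∀ i j, R i j ∈ Set.Icc (0:ℝ) 1) (hC : ∀ i j, C i j ∈ Set.Icc (0:ℝ) 1)
    (x y xs ys : Fin n → ℝ)
    (h : isWSNE ε R C x y)
    (hxs : isProb xs) (hys : isProb ys)
    (hsuppx : ∀ i, 0 < xs i → 0 < x i)
    (hsuppy : ∀ j, 0 < ys j → 0 < y j)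
    (hrow : ∀ i, |rowPay R i y - rowPay R i ys| ≤ ε)
    (hcol : ∀ j, |colPay C x j - colPay C xs j| ≤ ε) :
    isWSNE (3 * ε) R C xs ys := by
  obtain ⟨hx, hy, hrowNE, hcolNE⟩ := h
  refine ⟨hxs, hys, ?_, ?_⟩
  · intro i hi k
    have h1 := abs_le.mp (hrow i)
    have h2 := abs_le.mp (hrow k)
    have := hrowNE i (hsuppx i hi) k
    linarith [h1.1, h1.2, h2.1, h2.2]
  · intro j hj k
    have h1 := abs_le.mp (hcol j)
    have h2 := abs_le.mp (hcol k)
    have := hcolNE j (hsuppy j hj) k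
    linarith [h1.1, h1.2, h2.1, h2.2]
end

section
/- Let (x*, y*) be an ε-WSNE of the zero-sum game (R, -R) and (x̂, ŷ) an ε-WSNE of the zero-sum game (-C, C), with R, C having entries in [0,1]. If x̂^T C ŷ ≤ (x*)^T R y* ≤ 1/2, then (x̂, y*) is a (1/2 + ε)-well-supported Nash equilibrium of the bimatrix game (R, C). -/
open Finset

lemma pay_eq_row {n : ℕ} (A : Matrix (Fin n) (Fin n) ℝ) (x y : Fin n → ℝ) :
    pay A x y = ∑ i, x i * rowPay A i y := by
  unfold pay rowPay
  refine Finset.sum_congr rfl fun i _ => ?_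
  rw [Finset.mul_sum]
  exact Finset.sum_congr rfl fun j _ => by ring

lemma pay_eq_col {n : ℕ} (A : Matrix (Fin n) (Fin n) ℝ) (x y : Fin n → ℝ) :
    pay A x y = ∑ j, colPay A x j * y j := by
  unfold pay colPay
  rw [Finset.sum_comm]
  refine Finset.sum_congr rfl fun j _ => ?_
  rw [Finset.sum_mul]

/-- if `(x*,y*)` is an ε-WSNE of `(R,-R)` and `(x̂,ŷ)` is an ε-WSNE of
`(-C,C)`, with `x̂ᵀCŷ ≤ x*ᵀRy* ≤ 1/2`, then `(x̂, y*)` is a `(1/2 + ε)`-WSNE of `(R,C)`. -/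
theorem stmt11 {n : ℕ} (ε : ℝ) (hε : 0 ≤ ε) (R C : Matrix (Fin n) (Fin n) ℝ)
    (hR : ∀ i j, R i j ∈ Set.Icc (0:ℝ) 1) (hC : ∀ i j, C i j ∈ Set.Icc (0:ℝ) 1)
    (xs ys xh yh : Fin n → ℝ)
    (h1 : isWSNE ε R (-R) xs ys)
    (h2 : isWSNE ε (-C) C xh yh)
    (hle : pay C xh yh ≤ pay R xs ys) (hhalf : pay R xs ys ≤ 1/2) :
    isWSNE (1/2 + ε) R C xh ys := by
  obtain ⟨hxs, hys, hrow1, _⟩ := h1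
  obtain ⟨hxh, hyh, _, hcol2⟩ := h2
  -- every pure row payoff vs ys is at most pay R xs ys + ε
  have hrowbd : ∀ k, rowPay R k ys ≤ pay R xs ys + ε := by
    intro k
    have key : rowPay R k ys - ε ≤ pay R xs ys := by
      rw [pay_eq_row]
      have : ∑ i, xs i * (rowPay R k ys - ε) ≤ ∑ i, xs i * rowPay R i ys := by
        refine Finset.sum_le_sum fun i _ => ?_
        rcases lt_or_eq_of_le (hxs.1 i) with hp | hp
        · exact mul_le_mul_of_nonneg_left (hrow1 i hp k) (le_of_lt hp)
        · simp [← hp]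
      calc rowPay R k ys - ε = (∑ i, xs i) * (rowPay R k ys - ε) := by rw [hxs.2]; ring
        _ = ∑ i, xs i * (rowPay R k ys - ε) := by rw [Finset.sum_mul]
        _ ≤ _ := this
    linarith
  have hcolbd : ∀ k, colPay C xh k ≤ pay C xh yh + ε := by
    intro k
    have key : colPay C xh k - ε ≤ pay C xh yh := by
      rw [pay_eq_col]
      have : ∑ j, (colPay C xh k - ε) * yh j ≤ ∑ j, colPay C xh j * yh j := by
        refine Finset.sum_le_sum fun j _ => ?_
        rcases lt_or_eq_of_le (hyh.1 j) with hp | hp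
        · exact mul_le_mul_of_nonneg_right (hcol2 j hp k) (le_of_lt hp)
        · simp [← hp]
      calc colPay C xh k - ε = (colPay C xh k - ε) * (∑ j, yh j) := by rw [hyh.2]; ring
        _ = ∑ j, (colPay C xh k - ε) * yh j := by rw [Finset.mul_sum]
        _ ≤ _ := this
    linarith
  refine ⟨hxh, hys, ?_, ?_⟩
  · intro i _ k
    have h0 : 0 ≤ rowPay R i ys :=
      Finset.sum_nonneg fun j _ => mul_nonneg (hR i j).1 (hys.1 j)
    have := hrowbd k
    simp only [ge_iff_le]
    linarith
  · intro j _ k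
    have h0 : 0 ≤ colPay C xh j :=
      Finset.sum_nonneg fun i _ => mul_nonneg (hxh.1 i) (hC i j).1
    have := hcolbd k
    simp only [ge_iff_le]
    linarith
end

section
/- Let (R, C) be a bimatrix game with entries in [0,1] and let v_R be the value of the zero-sum game (R, -R) and v_C the value of the zero-sum game (-C, C) (i.e., the column player's guaranteed payoff). If both v_R ≤ 1/2 and v_C ≤ 1/2, then (R, C) admits a (1/2)-well-supported Nash equilibrium; namely, if (x*, y*) solves (R,-R) and (x̂, ŷ) solves (-C,C), then (x̂, y*) is a (1/2)-WSNE. -/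
open Finset

/-- if the value of `(R,-R)` and the (column) value of `(-C,C)` are both
at most 1/2, then `(x̂, y*)` is a 1/2-WSNE of `(R, C)`. -/
theorem stmt15 {n : ℕ} (R C : Matrix (Fin n) (Fin n) ℝ)
    (hR : ∀ i j, R i j ∈ Set.Icc (0:ℝ) 1) (hC : ∀ i j, C i j ∈ Set.Icc (0:ℝ) 1)
    (xs ys xh yh : Fin n → ℝ)
    (h1 : zeroSumNE_R R xs ys) (h2 : zeroSumNE_C C xh yh)
    (hvR : pay R xs ys ≤ 1/2) (hvC : pay C xh yh ≤ 1/2) :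
    isWSNE (1/2) R C xh ys := by
  obtain ⟨hxs, hys, hRmax, hRmin⟩ := h1
  obtain ⟨hxh, hyh, hCmin, hCmax⟩ := h2
  have hsingle : ∀ k : Fin n, isProb (Pi.single k (1:ℝ)) := by
    intro k
    constructor
    · intro i
      by_cases h : i = k
      · subst h; simp
      · simp [Pi.single_apply, h]
    · simp [Pi.single_apply]
  have hpayrow : ∀ k, pay R (Pi.single k (1:ℝ)) ys = rowPay R k ys := by
    intro k
    unfold pay rowPay
    rw [Finset.sum_eq_single k]
    · simp [Pi.single_apply]
    · intro b _ hb; simp [Pi.single_apply, hb]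
    · simp
  have hpaycol : ∀ k, pay C xh (Pi.single k (1:ℝ)) = colPay C xh k := by
    intro k
    unfold pay colPay
    rw [Finset.sum_comm]
    rw [Finset.sum_eq_single k]
    · simp [Pi.single_apply]
    · intro b _ hb; simp [Pi.single_apply, hb]
    · simp
  refine ⟨hxh, hys, ?_, ?_⟩
  · intro i _ k
    have h1 : rowPay R k ys ≤ 1/2 := by
      rw [← hpayrow k]
      exact le_trans (hRmax _ (hsingle k)) hvR
    have h2 : (0:ℝ) ≤ rowPay R i ys := by
      apply Finset.sum_nonneg
      intro j _
      exact mul_nonneg (hR i j).1 (hys.1 j)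
    linarith
  · intro j _ k
    have h1 : colPay C xh k ≤ 1/2 := by
      rw [← hpaycol k]
      exact le_trans (hCmax _ (hsingle k)) hvC
    have h2 : (0:ℝ) ≤ colPay C xh j := by
      apply Finset.sum_nonneg
      intro i _
      exact mul_nonneg (hxh.1 i) (hC i j).1
    linarith
end

section
/- Every bimatrix game (R, C) with entries in [0,1] admits a (1/2 + δ)-well-supported Nash equilibrium (w, z) for any δ > 0 in which both w and z are ⌈2 ln(1/δ)/δ²⌉-uniform strategies, provided the game has a Nash equilibrium (x, y) with both payoffs at least 1/2; moreover supp(w) ⊆ supp(x) and supp(z) ⊆ supp(y). -/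
/-! Sample `k` pure strategies independently from each of `x` and `y` and play the two
empirical distributions. A sampled row `i` lies in the support of `x`, so as `x` is a best
response its payoff against `y` is at least `1/2`; by Hoeffding its average payoff against the
`k` sampled columns falls below `1/2 - δ` with probability at most `exp (-2δ²k)`, and likewise for
the sampled columns. A union bound over the `2k` samples leaves a failure probability
`2k exp (-2δ²k) < 1` for `δ < 1/2` and `k = ⌈2 ln(1/δ)/δ²⌉`, so some sample works. As payoffs
lie in `[0,1]`, earning at least `1/2 - δ` on the support is a `(1/2 + δ)`-well-supported
equilibrium; for `δ ≥ 1/2` any pure profile on the supports already is one. -/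

open Finset

/-- A `k`-uniform strategy: every probability is a multiple of `1/k`. -/
def kUniform {n : ℕ} (k : ℕ) (x : Fin n → ℝ) : Prop :=
  ∀ i, ∃ m : ℕ, x i * k = m

open scoped Matrix

lemma log_le_div_exp_one {x : ℝ} (hx : 0 < x) : Real.log x ≤ x / Real.exp 1 := by
  have := Real.log_le_sub_one_of_pos (div_pos hx (Real.exp_pos 1))
  rw [Real.log_div hx.ne' (Real.exp_pos 1).ne', Real.log_exp] at this
  linarith

/-- The sample size `k = ⌈2 ln(1/δ)/δ²⌉` makes `exp (-2δ²k) ≤ δ⁴`, and `2kδ⁴ < 1` because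
`δ² ln(1/δ) ≤ δ/e`. -/
lemma two_mul_ceil_mul_exp_pow_lt_one {δ : ℝ} (hδ : 0 < δ) (hδ2 : δ < 1/2) :
    2 * (⌈2 * Real.log (1/δ) / δ^2⌉₊ : ℝ) * Real.exp (-(2 * δ^2)) ^ ⌈2 * Real.log (1/δ) / δ^2⌉₊
      < 1 := by
  set L := 2 * Real.log (1/δ) / δ^2 with hLdef
  set k := ⌈L⌉₊
  have hlog : Real.log (1/δ) = -Real.log δ := by rw [one_div, Real.log_inv]
  have hL : δ^2 * L = 2 * Real.log (1/δ) := by rw [hLdef]; field_simp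
  have hkL : L ≤ k := Nat.le_ceil L
  have hk : (k : ℝ) < L + 1 :=
    Nat.ceil_lt_add_one (div_nonneg (mul_nonneg zero_le_two
      (Real.log_nonneg (by rw [le_div_iff₀ hδ]; linarith))) (sq_nonneg δ))
  have hexp : Real.exp (-(2 * δ^2)) ^ k ≤ δ^4 :=
    calc Real.exp (-(2 * δ^2)) ^ k = Real.exp (-(2 * δ^2) * k) := by
          rw [← Real.exp_nat_mul, mul_comm]
      _ ≤ Real.exp (-(2 * δ^2) * L) :=
          Real.exp_le_exp.2 (mul_le_mul_of_nonpos_left hkL (by nlinarith))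
      _ = Real.exp (((4 : ℕ) : ℝ) * Real.log δ) := by congr 1; push_cast; linarith
      _ = δ^4 := by rw [Real.exp_nat_mul, Real.exp_log hδ]
  have hlogδ : δ^2 * Real.log (1/δ) ≤ δ / Real.exp 1 := by
    have := mul_le_mul_of_nonneg_left (log_le_div_exp_one (one_div_pos.2 hδ)) (sq_nonneg δ)
    rwa [show δ^2 * (1/δ / Real.exp 1) = δ / Real.exp 1 by field_simp] at this
  have hδe : 4 * (δ / Real.exp 1) < 3/4 := by
    rw [mul_div_assoc', div_lt_iff₀ (Real.exp_pos 1)]; linarith [Real.exp_one_gt_d9]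
  calc 2 * (k : ℝ) * Real.exp (-(2 * δ^2)) ^ k ≤ 2 * k * δ^4 := by gcongr
    _ ≤ 2 * (L + 1) * δ^4 := by gcongr
    _ = 4 * (δ^2 * Real.log (1/δ)) + 2 * δ^4 := by linear_combination 2 * δ^2 * hL
    _ < 1 := by
        have : δ^4 < (1/2)^4 := by gcongr
        linarith

lemma exp_neg_mul_le_of_mem_Icc (c : ℝ) {v : ℝ} (hv : v ∈ Set.Icc (0:ℝ) 1) :
    Real.exp (-c * v) ≤ 1 - v + v * Real.exp (-c) := by
  have := convexOn_exp.2 (Set.mem_univ 0) (Set.mem_univ (-c)) (sub_nonneg.2 hv.2) hv.1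
    (sub_add_cancel 1 v)
  simpa [mul_comm v c] using this

lemma exp_mul_one_add_exp_neg_div_two_le (δ : ℝ) :
    Real.exp (4 * δ * (1/2 - δ)) * ((1 + Real.exp (-(4 * δ))) / 2) ≤ Real.exp (-(2 * δ^2)) :=
  calc Real.exp (4 * δ * (1/2 - δ)) * ((1 + Real.exp (-(4 * δ))) / 2)
      = Real.exp (-(4 * δ^2)) * Real.cosh (2 * δ) := by
        rw [Real.cosh_eq, mul_div_assoc', mul_div_assoc', mul_add, mul_add, ← Real.exp_add,
          ← Real.exp_add, ← Real.exp_add]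
        ring_nf
    _ ≤ Real.exp (-(4 * δ^2)) * Real.exp ((2 * δ)^2 / 2) := by
        gcongr; exact Real.cosh_le_exp_half_sq _
    _ = Real.exp (-(2 * δ^2)) := by rw [← Real.exp_add]; ring_nf

section ProbabilisticMethod

variable {Ω : Type*} [Fintype Ω] {W : Ω → ℝ}

lemma sum_filter_exists_le_sum_sum_filter {ι : Type*} [Fintype ι] (hW : ∀ ω, 0 ≤ W ω)
    (B : ι → Ω → Prop) [∀ t, DecidablePred (B t)] [DecidablePred fun ω => ∃ t, B t ω] :
    ∑ ω with ∃ t, B t ω, W ω ≤ ∑ t, ∑ ω with B t ω, W ω := by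
  simp only [Finset.sum_filter]
  rw [Finset.sum_comm]
  refine Finset.sum_le_sum fun ω _ => ?_
  split_ifs with h
  · obtain ⟨t, ht⟩ := h
    calc W ω = if B t ω then W ω else 0 := (if_pos ht).symm
      _ ≤ ∑ t, if B t ω then W ω else 0 :=
        Finset.single_le_sum (f := fun t => if B t ω then W ω else 0)
          (fun t _ => ite_nonneg (hW ω) le_rfl) (Finset.mem_univ t)
  · exact Finset.sum_nonneg fun t _ => ite_nonneg (hW ω) le_rfl

lemma exists_and_pos_of_sum_filter_not_add_lt {P Q : Ω → Prop} [DecidablePred P]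
    [DecidablePred Q] (hW : ∀ ω, 0 ≤ W ω)
    (h : ∑ ω with ¬P ω, W ω + ∑ ω with ¬Q ω, W ω < ∑ ω, W ω) :
    ∃ ω, P ω ∧ Q ω ∧ 0 < W ω := by
  by_contra! hneg
  refine h.not_ge ?_
  simp only [Finset.sum_filter, ← Finset.sum_add_distrib]
  refine Finset.sum_le_sum fun ω _ => ?_
  by_cases hP : P ω <;> by_cases hQ : Q ω <;> simp [hP, hQ, hW ω, hneg ω]

end ProbabilisticMethod

section Games

variable {n k : ℕ}

lemma colPay_eq_rowPay_transpose (A : Matrix (Fin n) (Fin n) ℝ) (x : Fin n → ℝ) (j : Fin n) :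
    colPay A x j = rowPay Aᵀ j x := by
  simp only [colPay, rowPay, Matrix.transpose_apply, mul_comm]

lemma pay_transpose (A : Matrix (Fin n) (Fin n) ℝ) (x y : Fin n → ℝ) :
    pay Aᵀ y x = pay A x y := by
  simp only [pay, Matrix.transpose_apply]
  rw [Finset.sum_comm]
  exact Fintype.sum_congr _ _ fun i => Fintype.sum_congr _ _ fun j => by ring

lemma pay_eq_sum_mul_rowPay (A : Matrix (Fin n) (Fin n) ℝ) (x y : Fin n → ℝ) :
    pay A x y = ∑ i, x i * rowPay A i y := by
  simp only [pay, rowPay, Finset.mul_sum, mul_assoc]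

lemma isProb_single (i : Fin n) : isProb (Pi.single i 1 : Fin n → ℝ) :=
  ⟨fun j => by by_cases h : j = i <;> simp [h], by simp⟩

lemma exists_pos_of_isProb {x : Fin n → ℝ} (hx : isProb x) : ∃ i, 0 < x i := by
  by_contra! h
  linarith [hx.2, Finset.sum_nonpos fun i (_ : i ∈ Finset.univ) => h i]

lemma single_kUniform (i : Fin n) : kUniform k (Pi.single i 1 : Fin n → ℝ) := fun j => by
  by_cases h : j = i
  · exact ⟨k, by simp [h]⟩
  · exact ⟨0, by simp [h]⟩

lemma pay_single (A : Matrix (Fin n) (Fin n) ℝ) (i : Fin n) (y : Fin n → ℝ) :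
    pay A (Pi.single i 1) y = rowPay A i y := by
  simp [pay_eq_sum_mul_rowPay, Pi.single_apply]

lemma rowPay_le_one {A : Matrix (Fin n) (Fin n) ℝ} (hA : ∀ i j, A i j ∈ Set.Icc (0:ℝ) 1)
    {y : Fin n → ℝ} (hy : isProb y) (i : Fin n) : rowPay A i y ≤ 1 :=
  calc rowPay A i y ≤ ∑ j, y j :=
        Finset.sum_le_sum fun j _ => mul_le_of_le_one_left (hy.1 j) (hA i j).2
    _ = 1 := hy.2

lemma rowPay_nonneg {A : Matrix (Fin n) (Fin n) ℝ} (hA : ∀ i j, A i j ∈ Set.Icc (0:ℝ) 1)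
    {y : Fin n → ℝ} (hy : isProb y) (i : Fin n) : 0 ≤ rowPay A i y :=
  Finset.sum_nonneg fun j _ => mul_nonneg (hA i j).1 (hy.1 j)

lemma pay_le_rowPay_of_pos {A : Matrix (Fin n) (Fin n) ℝ} {x y : Fin n → ℝ} (hx : isProb x)
    (hbest : ∀ x', isProb x' → pay A x' y ≤ pay A x y) {i : Fin n} (hi : 0 < x i) :
    pay A x y ≤ rowPay A i y := by
  by_contra! hlt
  have hle : ∀ i', rowPay A i' y ≤ pay A x y := fun i' =>
    pay_single A i' y ▸ hbest _ (isProb_single i')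
  have : ∑ i', x i' * rowPay A i' y < ∑ i', x i' * pay A x y :=
    Finset.sum_lt_sum (fun i' _ => mul_le_mul_of_nonneg_left (hle i') (hx.1 i'))
      ⟨i, Finset.mem_univ i, mul_lt_mul_of_pos_left hlt hi⟩
  rw [← Finset.sum_mul, hx.2, one_mul, ← pay_eq_sum_mul_rowPay] at this
  exact this.false

lemma pay_le_colPay_of_pos {A : Matrix (Fin n) (Fin n) ℝ} {x y : Fin n → ℝ} (hy : isProb y)
    (hbest : ∀ y', isProb y' → pay A x y' ≤ pay A x y) {j : Fin n} (hj : 0 < y j) :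
    pay A x y ≤ colPay A x j := by
  rw [colPay_eq_rowPay_transpose, ← pay_transpose]
  exact pay_le_rowPay_of_pos hy (fun y' hy' => by simpa only [pay_transpose] using hbest y' hy') hj

lemma colPay_le_one {A : Matrix (Fin n) (Fin n) ℝ} (hA : ∀ i j, A i j ∈ Set.Icc (0:ℝ) 1)
    {x : Fin n → ℝ} (hx : isProb x) (j : Fin n) : colPay A x j ≤ 1 :=
  colPay_eq_rowPay_transpose A x j ▸ rowPay_le_one (A := Aᵀ) (fun i j => hA j i) hx j

lemma colPay_nonneg {A : Matrix (Fin n) (Fin n) ℝ} (hA : ∀ i j, A i j ∈ Set.Icc (0:ℝ) 1)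
    {x : Fin n → ℝ} (hx : isProb x) (j : Fin n) : 0 ≤ colPay A x j :=
  colPay_eq_rowPay_transpose A x j ▸ rowPay_nonneg (A := Aᵀ) (fun i j => hA j i) hx j

lemma isWSNE_of_forall_pos_le {R C : Matrix (Fin n) (Fin n) ℝ}
    (hR : ∀ i j, R i j ∈ Set.Icc (0:ℝ) 1) (hC : ∀ i j, C i j ∈ Set.Icc (0:ℝ) 1) {δ : ℝ}
    {w z : Fin n → ℝ} (hw : isProb w) (hz : isProb z)
    (hrow : ∀ i, 0 < w i → 1/2 - δ ≤ rowPay R i z)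
    (hcol : ∀ j, 0 < z j → 1/2 - δ ≤ colPay C w j) :
    isWSNE (1/2 + δ) R C w z :=
  ⟨hw, hz, fun i hi k => by linarith [hrow i hi, rowPay_le_one hR hz k],
    fun j hj k => by linarith [hcol j hj, colPay_le_one hC hw k]⟩

/-- The probability of drawing the sequence `f` in `k` independent draws from `p`. -/
def sampleWeight (p : Fin n → ℝ) (f : Fin k → Fin n) : ℝ := ∏ s, p (f s)

lemma sampleWeight_nonneg {p : Fin n → ℝ} (hp : isProb p) (f : Fin k → Fin n) :
    0 ≤ sampleWeight p f :=
  Finset.prod_nonneg fun _ _ => hp.1 _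

lemma sum_sampleWeight {p : Fin n → ℝ} (hp : isProb p) :
    ∑ f : Fin k → Fin n, sampleWeight p f = 1 := by
  simp only [sampleWeight, ← Fintype.sum_pow, hp.2, one_pow]

lemma pos_of_sampleWeight_ne_zero {p : Fin n → ℝ} (hp : isProb p) {f : Fin k → Fin n}
    (hf : sampleWeight p f ≠ 0) (t : Fin k) : 0 < p (f t) :=
  (hp.1 _).lt_of_ne' (Finset.prod_ne_zero_iff.1 hf t (Finset.mem_univ t))

lemma sum_sampleWeight_mul_apply {p : Fin n → ℝ} (hp : isProb p) (q : Fin n → ℝ) (t : Fin k) :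
    ∑ f : Fin k → Fin n, sampleWeight p f * q (f t) = ∑ j, p j * q j := by
  classical
  calc ∑ f : Fin k → Fin n, sampleWeight p f * q (f t)
      = ∑ f : Fin k → Fin n, ∏ s, p (f s) * if s = t then q (f s) else 1 := by
        simp only [sampleWeight, Finset.prod_mul_distrib, Finset.prod_ite_eq', Finset.mem_univ,
          if_true]
    _ = ∏ s, ∑ j, p j * if s = t then q j else 1 :=
        (Fintype.prod_sum fun (s : Fin k) (j : Fin n) => p j * if s = t then q j else 1).symm
    _ = ∑ j, p j * q j := by
        rw [Fintype.prod_eq_single t fun s hs => by simp [hs, hp.2]]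
        simp

lemma sum_sampleWeight_mul_exp_sum (p v : Fin n → ℝ) (c : ℝ) :
    ∑ f : Fin k → Fin n, sampleWeight p f * Real.exp (c * ∑ s, v (f s))
      = (∑ j, p j * Real.exp (c * v j)) ^ k := by
  simp only [Fintype.sum_pow, sampleWeight, Finset.mul_sum, Real.exp_sum, ← Finset.prod_mul_distrib]

lemma sum_mul_exp_neg_mul_le {p v : Fin n → ℝ} (hp : isProb p)
    (hv : ∀ j, v j ∈ Set.Icc (0:ℝ) 1) (hmean : 1/2 ≤ ∑ j, v j * p j) {c : ℝ} (hc : 0 ≤ c) :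
    ∑ j, p j * Real.exp (-c * v j) ≤ (1 + Real.exp (-c)) / 2 := by
  have hexp : Real.exp (-c) ≤ 1 := Real.exp_le_one_iff.2 (neg_nonpos.2 hc)
  calc ∑ j, p j * Real.exp (-c * v j) ≤ ∑ j, p j * (1 - v j + v j * Real.exp (-c)) :=
        Finset.sum_le_sum fun j _ =>
          mul_le_mul_of_nonneg_left (exp_neg_mul_le_of_mem_Icc c (hv j)) (hp.1 j)
    _ = ∑ j, p j - (1 - Real.exp (-c)) * ∑ j, v j * p j := by
        rw [Finset.mul_sum, ← Finset.sum_sub_distrib]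
        exact Finset.sum_congr rfl fun j _ => by ring
    _ ≤ (1 + Real.exp (-c)) / 2 := by rw [hp.2]; nlinarith

/-- Hoeffding's bound, via Markov's inequality for the exponential moment `exp (-4δ ∑ v)`. -/
lemma sum_sampleWeight_sum_lt_le {p v : Fin n → ℝ} (hp : isProb p)
    (hv : ∀ j, v j ∈ Set.Icc (0:ℝ) 1) (hmean : 1/2 ≤ ∑ j, v j * p j) {δ : ℝ} (hδ : 0 ≤ δ) :
    ∑ f : Fin k → Fin n with ∑ s, v (f s) < k * (1/2 - δ), sampleWeight p f
      ≤ Real.exp (-(2 * δ^2)) ^ k := by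
  set c := 4 * δ
  have hc : 0 ≤ c := by positivity
  have hmgf : 0 ≤ ∑ j, p j * Real.exp (-c * v j) :=
    Finset.sum_nonneg fun j _ => mul_nonneg (hp.1 j) (Real.exp_pos _).le
  calc ∑ f : Fin k → Fin n with ∑ s, v (f s) < k * (1/2 - δ), sampleWeight p f
      ≤ ∑ f : Fin k → Fin n with ∑ s, v (f s) < k * (1/2 - δ),
          Real.exp (c * (k * (1/2 - δ))) * (sampleWeight p f * Real.exp (-c * ∑ s, v (f s))) := by
        refine Finset.sum_le_sum fun f hf => ?_
        rw [mul_left_comm, mul_assoc, ← Real.exp_add]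
        refine le_mul_of_one_le_right (sampleWeight_nonneg hp f) (Real.one_le_exp ?_)
        nlinarith [(Finset.mem_filter.1 hf).2]
    _ ≤ ∑ f : Fin k → Fin n,
          Real.exp (c * (k * (1/2 - δ))) * (sampleWeight p f * Real.exp (-c * ∑ s, v (f s))) :=
        Finset.sum_le_sum_of_subset_of_nonneg (Finset.filter_subset _ _) fun f _ _ =>
          mul_nonneg (Real.exp_pos _).le (mul_nonneg (sampleWeight_nonneg hp f) (Real.exp_pos _).le)
    _ = (Real.exp (c * (1/2 - δ)) * ∑ j, p j * Real.exp (-c * v j)) ^ k := by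
        rw [← Finset.mul_sum, sum_sampleWeight_mul_exp_sum, mul_pow, ← Real.exp_nat_mul]
        ring_nf
    _ ≤ (Real.exp (c * (1/2 - δ)) * ((1 + Real.exp (-c)) / 2)) ^ k := by
        gcongr; exact sum_mul_exp_neg_mul_le hp hv hmean hc
    _ ≤ Real.exp (-(2 * δ^2)) ^ k := by
        gcongr
        exact exp_mul_one_add_exp_neg_div_two_le δ

noncomputable def empirical (f : Fin k → Fin n) (j : Fin n) : ℝ := (#{t | f t = j} : ℝ) / k

lemma empirical_isProb (hk : k ≠ 0) (f : Fin k → Fin n) : isProb (empirical f) := by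
  refine ⟨fun j => by unfold empirical; positivity, ?_⟩
  simp only [empirical, ← Finset.sum_div]
  rw [div_eq_one_iff_eq (Nat.cast_ne_zero.2 hk)]
  exact_mod_cast (Finset.card_eq_sum_card_fiberwise fun t _ => Finset.mem_univ (f t)).symm.trans
    (Finset.card_fin k)

lemma empirical_kUniform (hk : k ≠ 0) (f : Fin k → Fin n) : kUniform k (empirical f) :=
  fun j => ⟨#{t | f t = j}, div_mul_cancel₀ _ (Nat.cast_ne_zero.2 hk)⟩

lemma exists_eq_of_empirical_pos {f : Fin k → Fin n} {j : Fin n} (h : 0 < empirical f j) :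
    ∃ t, f t = j := by
  by_contra! hne
  simp [empirical, Finset.filter_false_of_mem fun t _ => hne t] at h

lemma rowPay_empirical (A : Matrix (Fin n) (Fin n) ℝ) (i : Fin n) (g : Fin k → Fin n) :
    rowPay A i (empirical g) = (∑ s, A i (g s)) / k := by
  rw [rowPay, ← Finset.sum_fiberwise Finset.univ g, Finset.sum_div]
  refine Finset.sum_congr rfl fun j _ => ?_
  rw [Finset.sum_congr rfl fun s hs => by rw [(Finset.mem_filter.1 hs).2], Finset.sum_const,
    nsmul_eq_mul, empirical]
  ring

lemma colPay_empirical (A : Matrix (Fin n) (Fin n) ℝ) (f : Fin k → Fin n) (j : Fin n) :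
    colPay A (empirical f) j = (∑ s, A (f s) j) / k := by
  rw [colPay_eq_rowPay_transpose, rowPay_empirical]
  rfl

/-- Union bound over the `k` sampled rows: conditionally on the sampled row being `i`, which
lies in the support of `x`, Hoeffding applies to the independent column sample. -/
lemma sum_sampleWeight_exists_rowSum_lt_le {A : Matrix (Fin n) (Fin n) ℝ}
    (hA : ∀ i j, A i j ∈ Set.Icc (0:ℝ) 1) {x y : Fin n → ℝ} (hx : isProb x) (hy : isProb y)
    (hxy : ∀ i, 0 < x i → 1/2 ≤ rowPay A i y) {δ : ℝ} (hδ : 0 ≤ δ) :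
    ∑ fg : (Fin k → Fin n) × (Fin k → Fin n) with ∃ t, ∑ s, A (fg.1 t) (fg.2 s) < k * (1/2 - δ),
        sampleWeight x fg.1 * sampleWeight y fg.2
      ≤ k * Real.exp (-(2 * δ^2)) ^ k := by
  set E := Real.exp (-(2 * δ^2)) ^ k
  set q : Fin n → ℝ := fun i =>
    ∑ g : Fin k → Fin n with ∑ s, A i (g s) < k * (1/2 - δ), sampleWeight y g
  have hq : ∀ i, x i * q i ≤ x i * E := fun i => by
    rcases (hx.1 i).eq_or_lt with hi | hi
    · simp [← hi]
    · exact mul_le_mul_of_nonneg_left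
        (sum_sampleWeight_sum_lt_le hy (hA i) (hxy i hi) hδ) hi.le
  have hrow : ∀ t, ∑ fg : (Fin k → Fin n) × (Fin k → Fin n) with
      ∑ s, A (fg.1 t) (fg.2 s) < k * (1/2 - δ), sampleWeight x fg.1 * sampleWeight y fg.2 ≤ E :=
    fun t => calc
      _ = ∑ f : Fin k → Fin n, sampleWeight x f * q (f t) := by
          simp only [q, Finset.sum_filter, Fintype.sum_prod_type, Finset.mul_sum, mul_ite,
            mul_zero]
      _ = ∑ i, x i * q i := sum_sampleWeight_mul_apply hx q t
      _ ≤ ∑ i, x i * E := Finset.sum_le_sum fun i _ => hq i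
      _ = E := by rw [← Finset.sum_mul, hx.2, one_mul]
  calc _ ≤ ∑ t : Fin k, ∑ fg : (Fin k → Fin n) × (Fin k → Fin n) with
          ∑ s, A (fg.1 t) (fg.2 s) < k * (1/2 - δ), sampleWeight x fg.1 * sampleWeight y fg.2 :=
        sum_filter_exists_le_sum_sum_filter
          (W := fun fg : (Fin k → Fin n) × (Fin k → Fin n) =>
            sampleWeight x fg.1 * sampleWeight y fg.2)
          (fun fg => mul_nonneg (sampleWeight_nonneg hx fg.1) (sampleWeight_nonneg hy fg.2))
          fun t fg => ∑ s, A (fg.1 t) (fg.2 s) < k * (1/2 - δ)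
    _ ≤ ∑ _t : Fin k, E := Finset.sum_le_sum fun t _ => hrow t
    _ = k * E := by rw [Finset.sum_const, Finset.card_univ, Fintype.card_fin, nsmul_eq_mul]

lemma exists_samples_forall_rowSum_colSum_ge {R C : Matrix (Fin n) (Fin n) ℝ}
    (hR : ∀ i j, R i j ∈ Set.Icc (0:ℝ) 1) (hC : ∀ i j, C i j ∈ Set.Icc (0:ℝ) 1)
    {x y : Fin n → ℝ} (hx : isProb x) (hy : isProb y)
    (hrow : ∀ i, 0 < x i → 1/2 ≤ rowPay R i y) (hcol : ∀ j, 0 < y j → 1/2 ≤ colPay C x j)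
    {δ : ℝ} (hδ : 0 ≤ δ) (hk : 2 * k * Real.exp (-(2 * δ^2)) ^ k < 1) :
    ∃ f g : Fin k → Fin n, (∀ t, 0 < x (f t)) ∧ (∀ t, 0 < y (g t)) ∧
      (∀ t, k * (1/2 - δ) ≤ ∑ s, R (f t) (g s)) ∧ (∀ t, k * (1/2 - δ) ≤ ∑ s, C (f s) (g t)) := by
  set W : (Fin k → Fin n) × (Fin k → Fin n) → ℝ := fun fg =>
    sampleWeight x fg.1 * sampleWeight y fg.2
  have hW : ∀ fg, 0 ≤ W fg := fun fg =>
    mul_nonneg (sampleWeight_nonneg hx fg.1) (sampleWeight_nonneg hy fg.2)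
  have hbadR := sum_sampleWeight_exists_rowSum_lt_le (k := k) hR hx hy hrow hδ
  -- The column event is the row event of the transposed game, with the two samples swapped.
  have hbadC : ∑ fg with ∃ t, ∑ s, C (fg.1 s) (fg.2 t) < k * (1/2 - δ), W fg
      ≤ k * Real.exp (-(2 * δ^2)) ^ k := by
    refine Eq.trans_le ?_ (sum_sampleWeight_exists_rowSum_lt_le (A := Cᵀ) (fun i j => hC j i)
      hy hx (fun j hj => colPay_eq_rowPay_transpose C x j ▸ hcol j hj) hδ)
    exact Finset.sum_equiv (Equiv.prodComm _ _) (by simp) fun _ _ => mul_comm _ _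
  have htotal : ∑ fg, W fg = 1 := by
    simp [W, Fintype.sum_prod_type, ← Finset.mul_sum, sum_sampleWeight hx, sum_sampleWeight hy]
  obtain ⟨⟨f, g⟩, hgoodR, hgoodC, hpos⟩ :=
    exists_and_pos_of_sum_filter_not_add_lt (W := W)
      (P := fun fg => ∀ t, k * (1/2 - δ) ≤ ∑ s, R (fg.1 t) (fg.2 s))
      (Q := fun fg => ∀ t, k * (1/2 - δ) ≤ ∑ s, C (fg.1 s) (fg.2 t)) hW (by
        simp only [not_forall, not_le]
        linarith)
  exact ⟨f, g, pos_of_sampleWeight_ne_zero hx (left_ne_zero_of_mul hpos.ne'),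
    pos_of_sampleWeight_ne_zero hy (right_ne_zero_of_mul hpos.ne'), hgoodR, hgoodC⟩

lemma exists_kUniform_isWSNE_of_two_mul_exp_pow_lt_one {R C : Matrix (Fin n) (Fin n) ℝ}
    (hR : ∀ i j, R i j ∈ Set.Icc (0:ℝ) 1) (hC : ∀ i j, C i j ∈ Set.Icc (0:ℝ) 1)
    {x y : Fin n → ℝ} (hx : isProb x) (hy : isProb y)
    (hrow : ∀ i, 0 < x i → 1/2 ≤ rowPay R i y) (hcol : ∀ j, 0 < y j → 1/2 ≤ colPay C x j)
    {δ : ℝ} (hδ : 0 ≤ δ) (hk0 : k ≠ 0) (hk : 2 * k * Real.exp (-(2 * δ^2)) ^ k < 1) :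
    ∃ w z : Fin n → ℝ, kUniform k w ∧ kUniform k z ∧
      (∀ i, 0 < w i → 0 < x i) ∧ (∀ j, 0 < z j → 0 < y j) ∧ isWSNE (1/2 + δ) R C w z := by
  obtain ⟨f, g, hf, hg, hgoodR, hgoodC⟩ :=
    exists_samples_forall_rowSum_colSum_ge hR hC hx hy hrow hcol hδ hk
  have hkpos : (0 : ℝ) < k := Nat.cast_pos.2 (Nat.pos_of_ne_zero hk0)
  refine ⟨empirical f, empirical g, empirical_kUniform hk0 f, empirical_kUniform hk0 g,
    fun i hi => ?_, fun j hj => ?_, isWSNE_of_forall_pos_le hR hC (empirical_isProb hk0 f)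
      (empirical_isProb hk0 g) (fun i hi => ?_) (fun j hj => ?_)⟩
  · obtain ⟨t, rfl⟩ := exists_eq_of_empirical_pos hi
    exact hf t
  · obtain ⟨t, rfl⟩ := exists_eq_of_empirical_pos hj
    exact hg t
  · obtain ⟨t, rfl⟩ := exists_eq_of_empirical_pos hi
    rw [rowPay_empirical, le_div_iff₀ hkpos, mul_comm]
    exact hgoodR t
  · obtain ⟨t, rfl⟩ := exists_eq_of_empirical_pos hj
    rw [colPay_empirical, le_div_iff₀ hkpos, mul_comm]
    exact hgoodC t

lemma exists_single_kUniform_isWSNE {R C : Matrix (Fin n) (Fin n) ℝ}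
    (hR : ∀ i j, R i j ∈ Set.Icc (0:ℝ) 1) (hC : ∀ i j, C i j ∈ Set.Icc (0:ℝ) 1)
    {x y : Fin n → ℝ} (hx : isProb x) (hy : isProb y) {δ : ℝ} (hδ : 1/2 ≤ δ) :
    ∃ w z : Fin n → ℝ, kUniform k w ∧ kUniform k z ∧
      (∀ i, 0 < w i → 0 < x i) ∧ (∀ j, 0 < z j → 0 < y j) ∧ isWSNE (1/2 + δ) R C w z := by
  obtain ⟨i, hi⟩ := exists_pos_of_isProb hx
  obtain ⟨j, hj⟩ := exists_pos_of_isProb hy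
  refine ⟨Pi.single i 1, Pi.single j 1, single_kUniform i, single_kUniform j,
    fun i' hi' => ?_, fun j' hj' => ?_, isWSNE_of_forall_pos_le hR hC (isProb_single i)
      (isProb_single j) (fun i' _ => ?_) (fun j' _ => ?_)⟩
  · obtain rfl : i' = i := by by_contra h; simp [h] at hi'
    exact hi
  · obtain rfl : j' = j := by by_contra h; simp [h] at hj'
    exact hj
  · linarith [rowPay_nonneg hR (isProb_single j) i']
  · linarith [colPay_nonneg hC (isProb_single i) j']

end Games

/-- if `(R, C)` has a Nash equilibrium `(x, y)` giving both players payoff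
at least 1/2, then for every `δ > 0` there is a `(1/2+δ)`-WSNE `(w, z)` in which both
strategies are `⌈2 ln(1/δ)/δ²⌉`-uniform and `supp(w) ⊆ supp(x)`, `supp(z) ⊆ supp(y)`. -/
theorem stmt16 {n : ℕ} (R C : Matrix (Fin n) (Fin n) ℝ)
    (hR : ∀ i j, R i j ∈ Set.Icc (0:ℝ) 1) (hC : ∀ i j, C i j ∈ Set.Icc (0:ℝ) 1)
    (δ : ℝ) (hδ : 0 < δ)
    (x y : Fin n → ℝ)
    (hx : isProb x) (hy : isProb y)
    (hrowNE : ∀ x', isProb x' → pay R x' y ≤ pay R x y)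
    (hcolNE : ∀ y', isProb y' → pay C x y' ≤ pay C x y)
    (hvR : pay R x y ≥ 1/2) (hvC : pay C x y ≥ 1/2) :
    ∃ w z : Fin n → ℝ,
      kUniform ⌈2 * Real.log (1/δ) / δ^2⌉₊ w ∧
      kUniform ⌈2 * Real.log (1/δ) / δ^2⌉₊ z ∧
      (∀ i, 0 < w i → 0 < x i) ∧ (∀ j, 0 < z j → 0 < y j) ∧
      isWSNE (1/2 + δ) R C w z := by
  have hrow : ∀ i, 0 < x i → 1/2 ≤ rowPay R i y := fun i hi =>
    hvR.trans (pay_le_rowPay_of_pos hx hrowNE hi)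
  have hcol : ∀ j, 0 < y j → 1/2 ≤ colPay C x j := fun j hj =>
    hvC.trans (pay_le_colPay_of_pos hy hcolNE hj)
  rcases lt_or_ge δ (1/2) with hδ2 | hδ2
  · have hlog : 0 < Real.log (1/δ) := Real.log_pos (by rw [lt_div_iff₀ hδ]; linarith)
    exact exists_kUniform_isWSNE_of_two_mul_exp_pow_lt_one hR hC hx hy hrow hcol hδ.le
      (by positivity) (two_mul_ceil_mul_exp_pow_lt_one hδ hδ2)
  · exact exists_single_kUniform_isWSNE hR hC hx hy hδ2
end

section
/- Let (x*, y*) be an ε-WSNE of the zero-sum game (R, -R) with (x*)^T R y* > 1/2, and let x' be a mixed strategy with supp(x') ⊆ supp(x*) and (x')^T C e_j ≤ 1/2 for all j. Then (x', y*) is a strategy profile in which every pure strategy in supp(x') is an ε-best response to y* under R, and every pure strategy of the column player has payoff at most 1/2 against x'; hence (x', y*) is a max(ε, 1/2)-well-supported Nash equilibrium of (R, C). -/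
open Finset

/-- if `(x*,y*)` is an ε-WSNE of `(R,-R)` with value above 1/2, and `x'`
is supported on `supp(x*)` with all column payoffs at most 1/2, then every pure
strategy in `supp(x')` is an ε-best response to `y*` under `R`, every column payoff
against `x'` is at most 1/2, and `(x', y*)` is a `max(ε, 1/2)`-WSNE of `(R, C)`. -/
theorem stmt19 {n : ℕ} (ε : ℝ) (hε : 0 ≤ ε) (R C : Matrix (Fin n) (Fin n) ℝ)
    (hR : ∀ i j, R i j ∈ Set.Icc (0:ℝ) 1) (hC : ∀ i j, C i j ∈ Set.Icc (0:ℝ) 1)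
    (xs ys x' : Fin n → ℝ)
    (h1 : isWSNE ε R (-R) xs ys)
    (hval : pay R xs ys > 1/2)
    (hx' : isProb x')
    (hsupp : ∀ i, 0 < x' i → 0 < xs i)
    (hcol : ∀ j, colPay C x' j ≤ 1/2) :
    (∀ i, 0 < x' i → ∀ k, rowPay R i ys ≥ rowPay R k ys - ε) ∧
    (∀ j, colPay C x' j ≤ 1/2) ∧
    isWSNE (max ε (1/2)) R C x' ys := by
  obtain ⟨hxs, hys, hrow, _⟩ := h1
  have hrow' : ∀ i, 0 < x' i → ∀ k, rowPay R i ys ≥ rowPay R k ys - ε :=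
    fun i hi k => hrow i (hsupp i hi) k
  refine ⟨hrow', hcol, hx', hys, fun i hi k => le_trans (by linarith [le_max_left ε (1/2)]) (hrow' i hi k), fun j _ k => ?_⟩
  have h0 : 0 ≤ colPay C x' j := Finset.sum_nonneg fun i _ =>
    mul_nonneg (hx'.1 i) (hC i j).1
  have := hcol k
  have := le_max_right ε (1/2)
  linarith
end
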